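/- Let K ≥ 0, let Φ : [0,∞) → L(H) be a family of bounded linear operators on H with operator norm ‖Φ(s)‖ ≤ K for all s, let h ∈ H, and let η : [0,∞) → H be continuous, with s ↦ Φ(s)(η(s)) continuous, satisfying η(t) = S(t)h + ∫₀^t S(t−s) Φ(s)(η(s)) ds for all t ≥ 0. Then for every T > 0 and every a ∈ (0,1) there exists a constant C (depending only on T, K, a and λ₀) such that for all t ∈ (0,T]: ‖η(t)‖ ≤ C ‖h‖, and moreover η(t) ∈ D_a with |η(t)|_a ≤ C (1 + t^{-a}) ‖h‖. -/

import Mathlib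

open Real MeasureTheory Set Filter
open scoped ENNReal Topology

noncomputable section

/-- `Hsp` is the real Hilbert space `ℓ²` of square-summable real sequences. -/
abbrev Hsp : Type := lp (fun _ : ℕ => ℝ) 2

/-- The norm `|x|_σ = (∑ₖ λₖ^{2σ} xₖ²)^{1/2}` of the domain `D((-A)^σ)`. -/
noncomputable def nrmD (lam : ℕ → ℝ) (σ : ℝ) (x : Hsp) : ℝ :=
  Real.sqrt (∑' k, lam k ^ (2 * σ) * (x k) ^ 2)

/-- Membership in the domain `D((-A)^σ)`: `∑ₖ λₖ^{2σ} xₖ² < ∞`. -/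
def memD (lam : ℕ → ℝ) (σ : ℝ) (x : Hsp) : Prop :=
  Summable (fun k => lam k ^ (2 * σ) * (x k) ^ 2)

/-!
Both estimates come from two properties of the diagonal semigroup: it is a contraction, and
it is smoothing, `|S(r)x|_a ≤ r^{-a}‖x‖`, because `λ^a e^{-λr} ≤ r^{-a}` for `0 ≤ a ≤ 1`.
Contractivity turns the mild equation into `‖η(t)‖ ≤ ‖h‖ + K ∫₀ᵗ ‖η‖`, and Grönwall gives
`‖η(t)‖ ≤ e^{KT}‖h‖`. Smoothing applied to the two terms of the mild equation then gives
`|η(t)|_a ≤ t^{-a}‖h‖ + K e^{KT}‖h‖ ∫₀ᵗ (t-s)^{-a} ds`, and the singularity is integrable as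
`a < 1`. Since `(-A)^a` is unbounded, `|·|_a` is handled through its finite truncations, which
are continuous linear maps and so commute with the Bochner integral.
-/

theorem exp_neg_mul_mem_Ioc {l r : ℝ} (hl : 0 ≤ l) (hr : 0 ≤ r) : exp (-(l * r)) ∈ Ioc 0 1 :=
  ⟨exp_pos _, exp_le_one_iff.2 (neg_nonpos.2 (mul_nonneg hl hr))⟩

theorem rpow_mul_exp_neg_mul_le {a l r : ℝ} (ha0 : 0 ≤ a) (ha1 : a ≤ 1) (hl : 0 ≤ l)
    (hr : 0 < r) : l ^ a * exp (-(l * r)) ≤ r ^ (-a) := by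
  have hlr : 0 ≤ l * r := mul_nonneg hl hr.le
  have hpow : (l * r) ^ a ≤ exp (a * (l * r)) := calc
    (l * r) ^ a ≤ exp (l * r) ^ a := by gcongr; linarith [add_one_le_exp (l * r)]
    _ = exp (a * (l * r)) := by rw [← exp_mul, mul_comm]
  have hdecay : exp (a * (l * r)) * exp (-(l * r)) ≤ 1 := by
    rw [← exp_add, exp_le_one_iff]; nlinarith
  rw [rpow_neg hr.le, ← one_div, le_div_iff₀ (rpow_pos_of_pos hr a)]
  calc l ^ a * exp (-(l * r)) * r ^ a = (l * r) ^ a * exp (-(l * r)) := by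
        rw [mul_rpow hl hr.le]; ring
    _ ≤ 1 := (mul_le_mul_of_nonneg_right hpow (exp_pos _).le).trans hdecay

theorem intervalIntegrable_sub_rpow_neg {a : ℝ} (ha : a < 1) (t : ℝ) :
    IntervalIntegrable (fun s => (t - s) ^ (-a)) volume 0 t := by
  simpa using (intervalIntegral.intervalIntegrable_rpow' (a := t) (b := 0)
    (by linarith : -1 < -a)).comp_sub_left t

theorem integral_sub_rpow_neg {a : ℝ} (ha : a < 1) (t : ℝ) :
    ∫ s in (0:ℝ)..t, (t - s) ^ (-a) = t ^ (1 - a) / (1 - a) := by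
  rw [intervalIntegral.integral_comp_sub_left (fun x => x ^ (-a)) t, sub_self, sub_zero,
    integral_rpow (Or.inl (by linarith)), zero_rpow (by linarith), sub_zero,
    neg_add_eq_sub]

theorem lp_two_norm_sq_eq_tsum (x : Hsp) : ‖x‖ ^ 2 = ∑' k, x k ^ 2 := by
  simpa using lp.norm_rpow_eq_tsum (p := 2) (by norm_num) x

theorem lp_two_summable_sq (x : Hsp) : Summable fun k => x k ^ 2 := by
  simpa using (lp.memℓp x).summable (p := 2) (by norm_num)

theorem lp_two_sum_sq_le_norm_sq (x : Hsp) (F : Finset ℕ) : ∑ k ∈ F, x k ^ 2 ≤ ‖x‖ ^ 2 := by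
  simpa using lp.sum_rpow_le_norm_rpow (p := 2) (by norm_num) x F

def weightedRestrict (w : ℕ → ℝ) (F : Finset ℕ) : Hsp →L[ℝ] EuclideanSpace ℝ F :=
  (EuclideanSpace.equiv F ℝ).symm.toContinuousLinearMap ∘L
    ContinuousLinearMap.pi fun i : F => w i • lp.evalCLM ℝ (fun _ : ℕ => ℝ) 2 i

theorem norm_weightedRestrict_sq (w : ℕ → ℝ) (F : Finset ℕ) (x : Hsp) :
    ‖weightedRestrict w F x‖ ^ 2 = ∑ k ∈ F, (w k * x k) ^ 2 := by
  rw [EuclideanSpace.real_norm_sq_eq]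
  exact Finset.sum_coe_sort F fun k => (w k * x k) ^ 2

theorem memD_and_nrmD_le_of_norm_weightedRestrict_le {lam : ℕ → ℝ} (hlam : ∀ k, 0 ≤ lam k)
    {σ W : ℝ} (hW : 0 ≤ W) {x : Hsp}
    (hx : ∀ F, ‖weightedRestrict (fun k => lam k ^ σ) F x‖ ≤ W) :
    memD lam σ x ∧ nrmD lam σ x ≤ W := by
  have hterm : ∀ k, lam k ^ (2 * σ) * x k ^ 2 = (lam k ^ σ * x k) ^ 2 := fun k => by
    rw [mul_pow, mul_comm 2 σ, rpow_mul (hlam k), rpow_two]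
  have hpartial : ∀ F : Finset ℕ, ∑ k ∈ F, lam k ^ (2 * σ) * x k ^ 2 ≤ W ^ 2 := fun F => by
    simp only [hterm, ← norm_weightedRestrict_sq]
    gcongr
    exact hx F
  have hnonneg : ∀ k, 0 ≤ lam k ^ (2 * σ) * x k ^ 2 := fun k => by
    rw [hterm]; positivity
  have hsum : memD lam σ x := summable_of_sum_le hnonneg hpartial
  refine ⟨hsum, ?_⟩
  rw [nrmD, sqrt_le_left hW]
  exact hsum.tsum_le_of_sum_le hpartial

theorem le_mul_exp_of_le_add_mul_integral {u : ℝ → ℝ} {c K : ℝ} (hu : ContinuousOn u (Ici 0))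
    (hK : 0 ≤ K) (h : ∀ t, 0 ≤ t → u t ≤ c + K * ∫ s in (0:ℝ)..t, u s) {t : ℝ} (ht : 0 ≤ t) :
    u t ≤ c * exp (K * t) := by
  set U : ℝ → ℝ := fun x => ∫ s in (0:ℝ)..x, u s
  have hint : ∀ x, 0 ≤ x → IntervalIntegrable u volume 0 x := fun x hx =>
    (hu.mono ((uIcc_of_le hx).subset.trans Icc_subset_Ici_self)).intervalIntegrable
  have hU : ContinuousOn U (Icc 0 t) := by
    simpa [uIcc_of_le ht] using
      intervalIntegral.continuousOn_primitive_interval' (hint t ht) left_mem_uIcc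
  have hU' : ∀ x ∈ Ico 0 t, HasDerivWithinAt U (u x) (Ici x) x := fun x hx =>
    have hux : ContinuousOn u (Ioi x) := hu.mono (Ioi_subset_Ici hx.1)
    intervalIntegral.integral_hasDerivWithinAt_right (hint x hx.1)
      (hux.stronglyMeasurableAtFilter_nhdsWithin measurableSet_Ioi x)
      ((hu x hx.1).mono (Ioi_subset_Ici hx.1))
  have hgron := le_gronwallBound_of_liminf_deriv_right_le (δ := 0) (K := K) (ε := c) hU
    (fun x hx r hr => (hU' x hx).liminf_right_slope_le hr) (by simp [U])
    (fun x hx => (h x hx.1).trans_eq (add_comm _ _)) t ⟨ht, le_rfl⟩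
  calc u t ≤ c + K * gronwallBound 0 K c (t - 0) := by
        linarith [h t ht, mul_le_mul_of_nonneg_left hgron hK]
    _ = c * exp (K * t) := by
        rcases eq_or_ne K 0 with rfl | hK0
        · simp
        · rw [gronwallBound_of_K_ne_0 hK0, sub_zero]; field_simp; ring

def IsDiagonalSemigroup (lam : ℕ → ℝ) (S : ℝ → Hsp → Hsp) : Prop :=
  ∀ t : ℝ, 0 ≤ t → ∀ (x : Hsp) (k : ℕ), S t x k = exp (-(lam k * t)) * x k

namespace IsDiagonalSemigroup

variable {lam : ℕ → ℝ} {S : ℝ → Hsp → Hsp}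

theorem apply_sub (hS : IsDiagonalSemigroup lam S) {r : ℝ} (hr : 0 ≤ r) (u v : Hsp) :
    S r u - S r v = S r (u - v) := by
  ext k
  simp only [lp.coeFn_sub, Pi.sub_apply, hS r hr]
  ring

theorem norm_apply_le (hS : IsDiagonalSemigroup lam S) (hlam : ∀ k, 0 ≤ lam k) {r : ℝ}
    (hr : 0 ≤ r) (x : Hsp) : ‖S r x‖ ≤ ‖x‖ :=
  lp.norm_mono two_ne_zero fun k => by
    obtain ⟨he0, he1⟩ := exp_neg_mul_mem_Ioc (hlam k) hr
    rw [hS r hr, norm_mul, norm_of_nonneg he0.le]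
    exact mul_le_of_le_one_left (norm_nonneg _) he1

theorem lipschitzWith_one (hS : IsDiagonalSemigroup lam S) (hlam : ∀ k, 0 ≤ lam k) {r : ℝ}
    (hr : 0 ≤ r) : LipschitzWith 1 (S r) :=
  LipschitzWith.of_dist_le_mul fun u v => by
    rw [NNReal.coe_one, one_mul, dist_eq_norm, dist_eq_norm, hS.apply_sub hr]
    exact hS.norm_apply_le hlam hr _

theorem continuousOn_apply (hS : IsDiagonalSemigroup lam S) (hlam : ∀ k, 0 ≤ lam k) (x : Hsp) :
    ContinuousOn (fun r => S r x) (Ici 0) := by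
  intro r₀ hr₀
  rw [ContinuousWithinAt, tendsto_iff_norm_sub_tendsto_zero]
  have hsq : ∀ r ∈ Ici (0:ℝ), ‖S r x - S r₀ x‖ ^ 2
      = ∑' k, ((exp (-(lam k * r)) - exp (-(lam k * r₀))) * x k) ^ 2 := fun r hr => by
    rw [lp_two_norm_sq_eq_tsum]
    congr! 2 with k
    rw [lp.coeFn_sub, Pi.sub_apply, hS r hr, hS r₀ hr₀, sub_mul]
  have hlim : Tendsto (fun r => ∑' k, ((exp (-(lam k * r)) - exp (-(lam k * r₀))) * x k) ^ 2)
      (𝓝[Ici 0] r₀) (𝓝 (∑' _ : ℕ, 0)) := by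
    refine tendsto_tsum_of_dominated_convergence (lp_two_summable_sq x) (fun k => ?_) ?_
    · have : Continuous fun r => ((exp (-(lam k * r)) - exp (-(lam k * r₀))) * x k) ^ 2 := by
        fun_prop
      simpa using (this.tendsto r₀).mono_left nhdsWithin_le_nhds
    · filter_upwards [self_mem_nhdsWithin] with r hr k
      obtain ⟨he0, he1⟩ := exp_neg_mul_mem_Ioc (hlam k) hr
      obtain ⟨he0', he1'⟩ := exp_neg_mul_mem_Ioc (hlam k) hr₀
      have : (exp (-(lam k * r)) - exp (-(lam k * r₀))) ^ 2 ≤ 1 := by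
        rw [sq_le_one_iff_abs_le_one, abs_le]; constructor <;> linarith
      rw [norm_of_nonneg (sq_nonneg _), mul_pow]
      exact mul_le_of_le_one_left (sq_nonneg _) this
  rw [tsum_zero] at hlim
  have hnorm := (continuous_sqrt.tendsto 0).comp (hlim.congr' (eventually_nhdsWithin_of_forall
    fun r hr => (hsq r hr).symm))
  simpa [Function.comp_def, sqrt_sq (norm_nonneg _)] using hnorm

theorem continuousOn_apply_sub (hS : IsDiagonalSemigroup lam S) (hlam : ∀ k, 0 ≤ lam k)
    {g : ℝ → Hsp} {t : ℝ} (hg : ContinuousOn g (Icc 0 t)) :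
    ContinuousOn (fun s => S (t - s) (g s)) (Icc 0 t) := by
  have hjoint : ContinuousOn (fun p : Hsp × ℝ => S p.2 p.1) (univ ×ˢ Ici 0) :=
    continuousOn_prod_of_continuousOn_lipschitzOnWith _ 1
      (fun x _ => hS.continuousOn_apply hlam x)
      (fun r hr => (hS.lipschitzWith_one hlam hr).lipschitzOnWith)
  exact hjoint.comp (hg.prodMk (continuousOn_const.sub continuousOn_id))
    fun s hs => ⟨mem_univ _, sub_nonneg.2 hs.2⟩

theorem intervalIntegrable_apply_sub (hS : IsDiagonalSemigroup lam S) (hlam : ∀ k, 0 ≤ lam k)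
    {g : ℝ → Hsp} {t : ℝ} (ht : 0 ≤ t) (hg : ContinuousOn g (Icc 0 t)) :
    IntervalIntegrable (fun s => S (t - s) (g s)) volume 0 t :=
  ((hS.continuousOn_apply_sub hlam hg).mono (uIcc_of_le ht).subset).intervalIntegrable

theorem norm_weightedRestrict_apply_le (hS : IsDiagonalSemigroup lam S) (hlam : ∀ k, 0 ≤ lam k)
    {a : ℝ} (ha0 : 0 ≤ a) (ha1 : a ≤ 1) {r : ℝ} (hr : 0 < r) (F : Finset ℕ) (x : Hsp) :
    ‖weightedRestrict (fun k => lam k ^ a) F (S r x)‖ ≤ r ^ (-a) * ‖x‖ := by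
  have hbound : 0 ≤ r ^ (-a) * ‖x‖ := mul_nonneg (rpow_nonneg hr.le _) (norm_nonneg _)
  rw [← pow_le_pow_iff_left₀ (norm_nonneg _) hbound two_ne_zero, norm_weightedRestrict_sq, mul_pow]
  calc ∑ k ∈ F, (lam k ^ a * S r x k) ^ 2
      ≤ ∑ k ∈ F, (r ^ (-a)) ^ 2 * x k ^ 2 := Finset.sum_le_sum fun k _ => by
        rw [hS r hr.le, ← mul_assoc, mul_pow]
        have := rpow_nonneg (hlam k) a
        gcongr
        exact rpow_mul_exp_neg_mul_le ha0 ha1 (hlam k) hr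
    _ ≤ (r ^ (-a)) ^ 2 * ‖x‖ ^ 2 := by
        rw [← Finset.mul_sum]
        exact mul_le_mul_of_nonneg_left (lp_two_sum_sq_le_norm_sq x F) (sq_nonneg _)

theorem norm_weightedRestrict_integral_le (hS : IsDiagonalSemigroup lam S)
    (hlam : ∀ k, 0 ≤ lam k) {a : ℝ} (ha0 : 0 ≤ a) (ha1 : a < 1) {g : ℝ → Hsp} {t B : ℝ}
    (ht : 0 ≤ t) (hg : ContinuousOn g (Icc 0 t)) (hgB : ∀ s ∈ Icc 0 t, ‖g s‖ ≤ B)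
    (F : Finset ℕ) :
    ‖weightedRestrict (fun k => lam k ^ a) F (∫ s in (0:ℝ)..t, S (t - s) (g s))‖
      ≤ B * (t ^ (1 - a) / (1 - a)) := by
  set P := weightedRestrict (fun k => lam k ^ a) F
  have hint := hS.intervalIntegrable_apply_sub hlam ht hg
  have hPint : IntervalIntegrable (fun s => ‖P (S (t - s) (g s))‖) volume 0 t :=
    ((P.continuous.comp_continuousOn (hS.continuousOn_apply_sub hlam hg)).norm.mono
      (uIcc_of_le ht).subset).intervalIntegrable
  rw [← P.intervalIntegral_comp_comm hint, ← integral_sub_rpow_neg ha1,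
    ← intervalIntegral.integral_const_mul]
  refine (intervalIntegral.norm_integral_le_integral_norm ht).trans
    (intervalIntegral.integral_mono_on_of_le_Ioo ht hPint
      ((intervalIntegrable_sub_rpow_neg ha1 t).const_mul B) fun s hs => ?_)
  have hts : 0 < t - s := sub_pos.2 hs.2
  calc ‖P (S (t - s) (g s))‖ ≤ (t - s) ^ (-a) * ‖g s‖ :=
        hS.norm_weightedRestrict_apply_le hlam ha0 ha1.le hts F _
    _ ≤ (t - s) ^ (-a) * B :=
        mul_le_mul_of_nonneg_left (hgB s (Ioo_subset_Icc_self hs)) (rpow_nonneg hts.le _)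
    _ = B * (t - s) ^ (-a) := mul_comm _ _

end IsDiagonalSemigroup

def IsMildSolution (S : ℝ → Hsp → Hsp) (Φ : ℝ → Hsp →L[ℝ] Hsp) (h : Hsp) (η : ℝ → Hsp) : Prop :=
  ∀ t : ℝ, 0 ≤ t → η t = S t h + ∫ s in (0:ℝ)..t, S (t - s) (Φ s (η s))

namespace IsMildSolution

variable {lam : ℕ → ℝ} {S : ℝ → Hsp → Hsp} {Φ : ℝ → Hsp →L[ℝ] Hsp} {h : Hsp} {η : ℝ → Hsp}

theorem norm_le_mul_exp (hη : IsMildSolution S Φ h η) (hS : IsDiagonalSemigroup lam S)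
    (hlam : ∀ k, 0 ≤ lam k) {K : ℝ} (hK : 0 ≤ K) (hΦ : ∀ s, 0 ≤ s → ‖Φ s‖ ≤ K)
    (hηc : ContinuousOn η (Ici 0)) (hgc : ContinuousOn (fun s => Φ s (η s)) (Ici 0))
    {t : ℝ} (ht : 0 ≤ t) : ‖η t‖ ≤ ‖h‖ * exp (K * t) := by
  refine le_mul_exp_of_le_add_mul_integral hηc.norm hK (fun t ht => ?_) ht
  have hgt : ContinuousOn (fun s => Φ s (η s)) (Icc 0 t) := hgc.mono Icc_subset_Ici_self
  have hKη : IntervalIntegrable (fun s => K * ‖η s‖) volume 0 t :=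
    ((hηc.mono Icc_subset_Ici_self).norm.const_smul K |>.mono
      (uIcc_of_le ht).subset).intervalIntegrable
  calc ‖η t‖ ≤ ‖S t h‖ + ‖∫ s in (0:ℝ)..t, S (t - s) (Φ s (η s))‖ := by
        rw [hη t ht]; exact norm_add_le _ _
    _ ≤ ‖h‖ + ∫ s in (0:ℝ)..t, K * ‖η s‖ := by
        gcongr
        · exact hS.norm_apply_le hlam ht h
        refine (intervalIntegral.norm_integral_le_integral_norm ht).trans
          (intervalIntegral.integral_mono_on ht
            (hS.intervalIntegrable_apply_sub hlam ht hgt).norm hKη fun s hs => ?_)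
        calc ‖S (t - s) (Φ s (η s))‖ ≤ ‖Φ s (η s)‖ := hS.norm_apply_le hlam (by linarith [hs.2]) _
          _ ≤ ‖Φ s‖ * ‖η s‖ := (Φ s).le_opNorm _
          _ ≤ K * ‖η s‖ := by gcongr; exact hΦ s hs.1
    _ = ‖h‖ + K * ∫ s in (0:ℝ)..t, ‖η s‖ := by rw [intervalIntegral.integral_const_mul]

theorem norm_le_exp_mul_of_le (hη : IsMildSolution S Φ h η) (hS : IsDiagonalSemigroup lam S)
    (hlam : ∀ k, 0 ≤ lam k) {K : ℝ} (hK : 0 ≤ K) (hΦ : ∀ s, 0 ≤ s → ‖Φ s‖ ≤ K)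
    (hηc : ContinuousOn η (Ici 0)) (hgc : ContinuousOn (fun s => Φ s (η s)) (Ici 0))
    {t T : ℝ} (ht : 0 ≤ t) (htT : t ≤ T) : ‖η t‖ ≤ exp (K * T) * ‖h‖ := calc
  ‖η t‖ ≤ ‖h‖ * exp (K * t) := hη.norm_le_mul_exp hS hlam hK hΦ hηc hgc ht
  _ ≤ exp (K * T) * ‖h‖ := by rw [mul_comm]; gcongr

theorem norm_weightedRestrict_le (hη : IsMildSolution S Φ h η) (hS : IsDiagonalSemigroup lam S)
    (hlam : ∀ k, 0 ≤ lam k) {a : ℝ} (ha0 : 0 ≤ a) (ha1 : a < 1)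
    (hgc : ContinuousOn (fun s => Φ s (η s)) (Ici 0)) {t B : ℝ} (ht : 0 < t)
    (hgB : ∀ s ∈ Icc 0 t, ‖Φ s (η s)‖ ≤ B) (F : Finset ℕ) :
    ‖weightedRestrict (fun k => lam k ^ a) F (η t)‖
      ≤ t ^ (-a) * ‖h‖ + B * (t ^ (1 - a) / (1 - a)) := by
  rw [hη t ht.le, map_add]
  exact (norm_add_le _ _).trans (add_le_add
    (hS.norm_weightedRestrict_apply_le hlam ha0 ha1.le ht F h)
    (hS.norm_weightedRestrict_integral_le hlam ha0 ha1 ht.le (hgc.mono Icc_subset_Ici_self) hgB F))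

theorem norm_weightedRestrict_le_exp (hη : IsMildSolution S Φ h η)
    (hS : IsDiagonalSemigroup lam S) (hlam : ∀ k, 0 ≤ lam k) {a : ℝ} (ha0 : 0 ≤ a) (ha1 : a < 1)
    {K : ℝ} (hK : 0 ≤ K) (hΦ : ∀ s, 0 ≤ s → ‖Φ s‖ ≤ K) (hηc : ContinuousOn η (Ici 0))
    (hgc : ContinuousOn (fun s => Φ s (η s)) (Ici 0)) {t T : ℝ} (ht : 0 < t) (htT : t ≤ T)
    (F : Finset ℕ) :
    ‖weightedRestrict (fun k => lam k ^ a) F (η t)‖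
      ≤ t ^ (-a) * ‖h‖ + exp (K * T) * ‖h‖ * (K * (T ^ (1 - a) / (1 - a))) := by
  have hgB : ∀ s ∈ Icc 0 t, ‖Φ s (η s)‖ ≤ K * (exp (K * T) * ‖h‖) := fun s hs =>
    ((Φ s).le_opNorm _).trans (mul_le_mul (hΦ s hs.1)
      (hη.norm_le_exp_mul_of_le hS hlam hK hΦ hηc hgc hs.1 (hs.2.trans htT)) (norm_nonneg _) hK)
  have h1a : 0 < 1 - a := sub_pos.2 ha1
  calc ‖weightedRestrict (fun k => lam k ^ a) F (η t)‖
      ≤ t ^ (-a) * ‖h‖ + K * (exp (K * T) * ‖h‖) * (t ^ (1 - a) / (1 - a)) :=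
        hη.norm_weightedRestrict_le hS hlam ha0 ha1 hgc ht hgB F
    _ ≤ t ^ (-a) * ‖h‖ + exp (K * T) * ‖h‖ * (K * (T ^ (1 - a) / (1 - a))) := by
        rw [mul_comm K, mul_assoc]; gcongr

end IsMildSolution

/-- Proposition B.4: the first variation `η` of the averaged flow, solving the mild
equation `η(t) = S(t)h + ∫₀ᵗ S(t−s) Φ(s)(η(s)) ds` for a uniformly bounded operator
family `Φ`, satisfies `‖η(t)‖ ≤ C‖h‖` and `η(t) ∈ D_a` with
`|η(t)|_a ≤ C (1 + t^{-a}) ‖h‖` on `(0,T]`, `C` depending only on `T`, `K`, `a`, `λ₀`. -/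
theorem stmt12
    (lam : ℕ → ℝ) (lam0 : ℝ) (hlam0 : 0 < lam0) (hlam : ∀ k, lam0 ≤ lam k)
    (S : ℝ → Hsp → Hsp)
    (hS : ∀ t : ℝ, 0 ≤ t → ∀ (x : Hsp) (k : ℕ), S t x k = Real.exp (-(lam k * t)) * x k)
    (K : ℝ) (hK : 0 ≤ K)
    (T : ℝ) (hT : 0 < T) (a : ℝ) (ha : a ∈ Set.Ioo (0:ℝ) 1) :
    ∃ C > 0, ∀ Φ : ℝ → Hsp →L[ℝ] Hsp, (∀ s : ℝ, 0 ≤ s → ‖Φ s‖ ≤ K) →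
      ∀ h : Hsp, ∀ η : ℝ → Hsp,
      ContinuousOn η (Set.Ici 0) →
      ContinuousOn (fun s => Φ s (η s)) (Set.Ici 0) →
      (∀ t : ℝ, 0 ≤ t → η t = S t h + ∫ s in (0:ℝ)..t, S (t - s) (Φ s (η s))) →
      ∀ t ∈ Set.Ioc (0:ℝ) T,
        ‖η t‖ ≤ C * ‖h‖ ∧
        memD lam a (η t) ∧
        nrmD lam a (η t) ≤ C * (1 + t ^ (-a)) * ‖h‖ := by
  obtain ⟨ha0, ha1⟩ := ha
  replace hS : IsDiagonalSemigroup lam S := hS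
  have hlam' : ∀ k, 0 ≤ lam k := fun k => hlam0.le.trans (hlam k)
  set E := exp (K * T)
  have hE : 1 ≤ E := one_le_exp (by positivity)
  set Q := K * (T ^ (1 - a) / (1 - a))
  have hQ : 0 ≤ Q := by have := sub_pos.2 ha1; positivity
  refine ⟨E * (1 + Q), by positivity, fun Φ hΦ h η hηc hgc hη t ⟨ht0, htT⟩ => ?_⟩
  replace hη : IsMildSolution S Φ h η := hη
  have htn : 0 ≤ t ^ (-a) * ‖h‖ := mul_nonneg (rpow_nonneg ht0.le _) (norm_nonneg h)
  have hEh : 0 ≤ E * ‖h‖ := by positivity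
  have hweighted : ∀ F, ‖weightedRestrict (fun k => lam k ^ a) F (η t)‖
      ≤ E * (1 + Q) * (1 + t ^ (-a)) * ‖h‖ := fun F =>
    (hη.norm_weightedRestrict_le_exp hS hlam' ha0.le ha1 hK hΦ hηc hgc ht0 htT F).trans
      (by nlinarith [mul_nonneg (sub_nonneg.2 hE) htn, mul_nonneg hQ htn, mul_nonneg hQ hEh])
  obtain ⟨hmem, hnrm⟩ :=
    memD_and_nrmD_le_of_norm_weightedRestrict_le hlam' (by positivity) hweighted
  refine ⟨(hη.norm_le_exp_mul_of_le hS hlam' hK hΦ hηc hgc ht0.le htT).trans ?_, hmem, hnrm⟩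
  exact mul_le_mul_of_nonneg_right (le_mul_of_one_le_right (by positivity) (by linarith))
    (norm_nonneg h)

end
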